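/- Let n ≥ 1, ρ : ℝⁿ → (0,∞), c₀ > 0, β > 0 and m = ⌊β⌋ + 1. Let Q_v(x,y) (v > 0, x, y ∈ ℝⁿ) be a measurable family such that for every N > 0 there is C_N with |Q_v(x,y)| ≤ C_N v^{−n} e^{−c₀|x−y|²/v²} (1 + v/ρ(x) + v/ρ(y))^{−N}. Define D_β(t,x,y) = (2(−1)^m e^{−iπ(m−β)})/(Γ(m−β)√π) ∫_0^∞ [∫_0^∞ H_{m−1}((t+s)/(2v)) e^{−(t+s)²/(4v²)} s^{m−β−1} ds] (2v)^{1−m} Q_v(x,y) v^{−2} dv. Then for every N > 0 there exists a constant C (depending on n, N, β, c₀ and the constants C_N) such that |t^β D_β(t,x,y)| ≤ C t^β (|x−y|² + t²)^{−(n+β)/2} (1 + (|x−y|² + t²)^{1/2}/ρ(x) + (|x−y|² + t²)^{1/2}/ρ(y))^{−N} for all x, y ∈ ℝⁿ, t > 0. -/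

import Mathlib

open MeasureTheory Metric Set

/-- The (physicists') Hermite polynomial function,
`H_k(r) = (−1)^k e^{r²} (d/dr)^k e^{−r²}`. -/
noncomputable def hermiteH (k : ℕ) (r : ℝ) : ℝ :=
  (-1) ^ k * Real.exp (r ^ 2) * iteratedDeriv k (fun s => Real.exp (-(s ^ 2))) r

/-- The fractional time derivative of order `β` of the subordinated Poisson kernel
built from the family `Q`, following formula (3.12) of the paper. -/
noncomputable def Dbeta (n : ℕ) (β : ℝ) (m : ℕ)
    (Q : ℝ → EuclideanSpace ℝ (Fin n) → EuclideanSpace ℝ (Fin n) → ℝ)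
    (t : ℝ) (x y : EuclideanSpace ℝ (Fin n)) : ℂ :=
  (2 * (-1 : ℂ) ^ m * Complex.exp (-Complex.I * (Real.pi : ℂ) * ((m : ℂ) - (β : ℂ))) /
      ((Real.Gamma ((m : ℝ) - β) : ℂ) * ((Real.sqrt Real.pi : ℝ) : ℂ))) *
    ((∫ v in Ioi (0 : ℝ),
        (∫ s in Ioi (0 : ℝ),
          hermiteH (m - 1) ((t + s) / (2 * v)) * Real.exp (-((t + s) ^ 2) / (4 * v ^ 2)) *
            s ^ ((m : ℝ) - β - 1)) *
        (2 * v) ^ (1 - (m : ℝ)) * Q v x y / v ^ 2 : ℝ) : ℂ)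

/-!
The Hermite factor is absorbed into half of its Gaussian, `|H_k(u)| e^{-u²} ≤ A e^{-u²/2}`, and
`(t + s)² ≥ t² + s²` splits that Gaussian so that the `s`-integral becomes a Gaussian moment,
of size `v^{m-β} e^{-t²/(8v²)}`. With the bound on `Q`, the `v`-integrand is then at most
`v^{-1-(n+β)} e^{-c r²/v²}` times the weight in `ρ`, where `r² = |x-y|² + t²`; the weight at
scale `v` is traded for the weight at scale `r` at the cost of a factor `(1 + r/v)^N`. After the
substitution `v = 1/y` the remaining `v`-integrals are Gamma integrals, each a multiple of
`r^{-(n+β)}`.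
-/

open Real Polynomial
open scoped Nat

lemma exists_iteratedDeriv_exp_neg_sq_eq (k : ℕ) : ∃ p : ℝ[X],
    iteratedDeriv k (fun s => rexp (-(s ^ 2))) = fun u => p.eval u * rexp (-(u ^ 2)) := by
  induction k with
  | zero => exact ⟨1, by simp⟩
  | succ k ih =>
    obtain ⟨p, hp⟩ := ih
    refine ⟨derivative p - C 2 * X * p, funext fun u => ?_⟩
    have hgauss : HasDerivAt (fun s => rexp (-(s ^ 2))) (rexp (-(u ^ 2)) * -(2 * u)) u := by
      simpa using ((hasDerivAt_pow 2 u).neg).exp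
    rw [iteratedDeriv_succ, hp, ((p.hasDerivAt u).fun_mul hgauss).deriv]
    simp only [eval_sub, eval_mul, eval_C, eval_X]
    ring

lemma abs_pow_le_factorial_mul_exp_sq (i : ℕ) (u : ℝ) :
    |u| ^ i ≤ i ! * rexp (1 / 2) * rexp (u ^ 2 / 2) := by
  have hlin : |u| ≤ 1 / 2 + u ^ 2 / 2 := by nlinarith [sq_nonneg (|u| - 1), sq_abs u]
  calc |u| ^ i ≤ i ! * rexp |u| := by
        have := pow_div_factorial_le_exp (x := |u|) (abs_nonneg u) i
        rwa [div_le_iff₀ (by positivity), mul_comm] at this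
    _ ≤ i ! * rexp (1 / 2 + u ^ 2 / 2) := by gcongr
    _ = i ! * rexp (1 / 2) * rexp (u ^ 2 / 2) := by rw [exp_add, mul_assoc]

lemma Polynomial.exists_abs_eval_le_mul_exp_sq (p : ℝ[X]) :
    ∃ A ≥ 0, ∀ u : ℝ, |p.eval u| ≤ A * rexp (u ^ 2 / 2) := by
  refine ⟨∑ i ∈ Finset.range (p.natDegree + 1), |p.coeff i| * (i ! * rexp (1 / 2)),
    by positivity, fun u => ?_⟩
  rw [eval_eq_sum_range, Finset.sum_mul]
  refine (Finset.abs_sum_le_sum_abs _ _).trans (Finset.sum_le_sum fun i _ => ?_)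
  rw [abs_mul, abs_pow, mul_assoc]
  gcongr
  exact abs_pow_le_factorial_mul_exp_sq i u

lemma exists_abs_hermiteH_mul_exp_le (k : ℕ) : ∃ A ≥ 0, ∀ u : ℝ,
    |hermiteH k u| * rexp (-(u ^ 2)) ≤ A * rexp (-(u ^ 2) / 2) := by
  obtain ⟨p, hp⟩ := exists_iteratedDeriv_exp_neg_sq_eq k
  obtain ⟨A, hA, hpA⟩ := p.exists_abs_eval_le_mul_exp_sq
  refine ⟨A, hA, fun u => ?_⟩
  have hH : hermiteH k u = (-1) ^ k * p.eval u := by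
    have hexp : rexp (u ^ 2) * rexp (-(u ^ 2)) = 1 := by rw [← exp_add]; simp
    rw [hermiteH, hp]
    linear_combination (-1) ^ k * p.eval u * hexp
  calc |hermiteH k u| * rexp (-(u ^ 2)) ≤ A * rexp (u ^ 2 / 2) * rexp (-(u ^ 2)) := by
        rw [hH, abs_mul, abs_pow, abs_neg, abs_one, one_pow, one_mul]
        gcongr
        exact hpA u
    _ = A * rexp (-(u ^ 2) / 2) := by rw [mul_assoc, ← exp_add]; ring_nf

lemma mul_sq_rpow_half {c v : ℝ} (hc : 0 ≤ c) (hv : 0 ≤ v) (x : ℝ) :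
    (c * v ^ 2) ^ (x / 2) = c ^ (x / 2) * v ^ x := by
  rw [mul_rpow hc (by positivity), ← rpow_two, ← rpow_mul hv]
  ring_nf

noncomputable def hermiteTimeIntegral (k : ℕ) (a t v : ℝ) : ℝ :=
  ∫ s in Ioi (0 : ℝ),
    hermiteH k ((t + s) / (2 * v)) * rexp (-((t + s) ^ 2) / (4 * v ^ 2)) * s ^ a

noncomputable def DbetaIntegrand (n : ℕ) (β : ℝ) (m : ℕ)
    (Q : ℝ → EuclideanSpace ℝ (Fin n) → EuclideanSpace ℝ (Fin n) → ℝ)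
    (t : ℝ) (x y : EuclideanSpace ℝ (Fin n)) (v : ℝ) : ℝ :=
  hermiteTimeIntegral (m - 1) ((m : ℝ) - β - 1) t v * (2 * v) ^ (1 - (m : ℝ)) * Q v x y / v ^ 2

noncomputable def DbetaConst (β : ℝ) (m : ℕ) : ℂ :=
  2 * (-1 : ℂ) ^ m * Complex.exp (-Complex.I * (Real.pi : ℂ) * ((m : ℂ) - (β : ℂ))) /
      ((Real.Gamma ((m : ℝ) - β) : ℂ) * ((Real.sqrt Real.pi : ℝ) : ℂ))

lemma Dbeta_eq (n : ℕ) (β : ℝ) (m : ℕ)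
    (Q : ℝ → EuclideanSpace ℝ (Fin n) → EuclideanSpace ℝ (Fin n) → ℝ)
    (t : ℝ) (x y : EuclideanSpace ℝ (Fin n)) :
    Dbeta n β m Q t x y =
      DbetaConst β m * (∫ v in Ioi (0 : ℝ), DbetaIntegrand n β m Q t x y v : ℝ) :=
  rfl

lemma abs_hermiteTimeIntegral_le {k : ℕ} {a A t v : ℝ} (ha : 0 < a) (ht : 0 ≤ t) (hv : 0 < v)
    (hA : 0 ≤ A) (hH : ∀ u, |hermiteH k u| * rexp (-(u ^ 2)) ≤ A * rexp (-(u ^ 2) / 2)) :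
    |hermiteTimeIntegral k (a - 1) t v| ≤
      A * (8 ^ (a / 2) * (1 / 2) * Gamma (a / 2)) * rexp (-(t ^ 2) / (8 * v ^ 2)) * v ^ a := by
  set b := (8 * v ^ 2)⁻¹ with hb_def
  have hb : 0 < b := by positivity
  have hpt : ∀ s ∈ Ioi (0 : ℝ),
      ‖hermiteH k ((t + s) / (2 * v)) * rexp (-((t + s) ^ 2) / (4 * v ^ 2)) * s ^ (a - 1)‖ ≤
        A * rexp (-(t ^ 2) / (8 * v ^ 2)) * (s ^ (a - 1) * rexp (-b * s ^ (2 : ℝ))) := by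
    intro s (hs : 0 < s)
    set u := (t + s) / (2 * v)
    have hu : -((t + s) ^ 2) / (4 * v ^ 2) = -(u ^ 2) := by simp only [u]; field_simp; ring
    have hsplit :
        rexp (-(u ^ 2) / 2) ≤ rexp (-(t ^ 2) / (8 * v ^ 2)) * rexp (-b * s ^ (2 : ℝ)) := by
      rw [← exp_add, exp_le_exp, rpow_two]
      simp only [u, b]
      field_simp
      nlinarith [mul_nonneg ht hs.le]
    rw [norm_mul, norm_mul, hu, Real.norm_eq_abs, Real.norm_eq_abs, Real.norm_eq_abs,
      abs_exp, abs_of_nonneg (rpow_nonneg hs.le (a - 1))]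
    calc |hermiteH k u| * rexp (-(u ^ 2)) * s ^ (a - 1)
        ≤ A * rexp (-(u ^ 2) / 2) * s ^ (a - 1) :=
          mul_le_mul_of_nonneg_right (hH u) (rpow_nonneg hs.le (a - 1))
      _ ≤ A * (rexp (-(t ^ 2) / (8 * v ^ 2)) * rexp (-b * s ^ (2 : ℝ))) * s ^ (a - 1) := by
          gcongr
      _ = _ := by ring
  have hint := (integrableOn_rpow_mul_exp_neg_mul_rpow (s := a - 1) (by linarith) two_pos
    hb).const_mul (A * rexp (-(t ^ 2) / (8 * v ^ 2)))
  calc |hermiteTimeIntegral k (a - 1) t v|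
      ≤ ∫ s in Ioi (0 : ℝ),
          A * rexp (-(t ^ 2) / (8 * v ^ 2)) * (s ^ (a - 1) * rexp (-b * s ^ (2 : ℝ))) :=
        norm_integral_le_of_norm_le hint
          ((ae_restrict_iff' measurableSet_Ioi).mpr (.of_forall hpt))
    _ = _ := by
        rw [integral_const_mul, integral_rpow_mul_exp_neg_mul_rpow two_pos (by linarith) hb,
          sub_add_cancel, neg_div 2 a, rpow_neg hb.le, hb_def, inv_rpow (by positivity), inv_inv,
          mul_sq_rpow_half (by norm_num) hv.le]
        ring

-- The shape of `integral_comp_rpow_Ioi` with `p = -1`: after `y = v⁻¹` this is the Gaussian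
-- moment `y ^ (b - 1) e^{-c y²}`.
lemma rpow_mul_exp_neg_div_sq_eq_comp_inv {b c v : ℝ} (hv : 0 < v) :
    v ^ (-1 - b) * rexp (-c / v ^ 2) =
      (|(-1 : ℝ)| * v ^ ((-1 : ℝ) - 1)) •
        ((v ^ (-1 : ℝ)) ^ (b - 1) * rexp (-c * (v ^ (-1 : ℝ)) ^ (2 : ℝ))) := by
  rw [rpow_neg_one, inv_rpow hv.le, ← rpow_neg hv.le, rpow_two, smul_eq_mul, abs_neg, abs_one,
    one_mul, ← mul_assoc, ← rpow_add hv]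
  congr 2
  · ring
  · field_simp

lemma integrableOn_rpow_mul_exp_neg_div_sq {b c : ℝ} (hb : 0 < b) (hc : 0 < c) :
    IntegrableOn (fun v => v ^ (-1 - b) * rexp (-c / v ^ 2)) (Ioi 0) := by
  refine (((integrableOn_Ioi_comp_rpow_iff _ (by norm_num : (-1 : ℝ) ≠ 0)).mpr
    (integrableOn_rpow_mul_exp_neg_mul_rpow (by linarith : -1 < b - 1) two_pos hc))).congr_fun
    (fun v hv => ?_) measurableSet_Ioi
  exact (rpow_mul_exp_neg_div_sq_eq_comp_inv hv).symm

lemma integral_rpow_mul_exp_neg_div_sq {b c : ℝ} (hb : 0 < b) (hc : 0 < c) :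
    ∫ v in Ioi (0 : ℝ), v ^ (-1 - b) * rexp (-c / v ^ 2) =
      c ^ (-b / 2) * (1 / 2) * Gamma (b / 2) := by
  rw [setIntegral_congr_fun measurableSet_Ioi fun _ hv => rpow_mul_exp_neg_div_sq_eq_comp_inv hv,
    integral_comp_rpow_Ioi (fun y => y ^ (b - 1) * rexp (-c * y ^ (2 : ℝ))) (by norm_num),
    integral_rpow_mul_exp_neg_mul_rpow two_pos (by linarith) hc]
  ring_nf

lemma one_add_rpow_le_two_rpow_mul {x N : ℝ} (hx : 0 ≤ x) (hN : 0 ≤ N) :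
    (1 + x) ^ N ≤ 2 ^ N * (1 + x ^ N) := by
  rcases le_total x 1 with h | h
  · calc (1 + x) ^ N ≤ 2 ^ N := by gcongr; linarith
      _ ≤ 2 ^ N * (1 + x ^ N) := le_mul_of_one_le_right (by positivity)
          (le_add_of_nonneg_right (by positivity))
  · calc (1 + x) ^ N ≤ (2 * x) ^ N := by gcongr; linarith
      _ = 2 ^ N * x ^ N := mul_rpow (by norm_num) hx
      _ ≤ 2 ^ N * (1 + x ^ N) := by gcongr; linarith

lemma abs_integral_le_of_le_rpow_mul_exp_neg_div_sq {F : ℝ → ℝ} {B b c N r : ℝ} (hB : 0 ≤ B)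
    (hb : 0 < b) (hc : 0 < c) (hN : 0 ≤ N) (hr : 0 < r)
    (hF : ∀ v > 0, |F v| ≤ B * (v ^ (-1 - b) * rexp (-(c * r ^ 2) / v ^ 2) * (1 + r / v) ^ N)) :
    |∫ v in Ioi (0 : ℝ), F v| ≤
      B * (2 ^ N * (c ^ (-b / 2) * (1 / 2) * Gamma (b / 2) +
        c ^ (-(b + N) / 2) * (1 / 2) * Gamma ((b + N) / 2))) * r ^ (-b) := by
  have hcr : 0 < c * r ^ 2 := by positivity
  set g : ℝ → ℝ := fun v => B * 2 ^ N * (v ^ (-1 - b) * rexp (-(c * r ^ 2) / v ^ 2) +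
    r ^ N * (v ^ (-1 - (b + N)) * rexp (-(c * r ^ 2) / v ^ 2)))
  have hg : IntegrableOn g (Ioi 0) :=
    ((integrableOn_rpow_mul_exp_neg_div_sq hb hcr).add
      ((integrableOn_rpow_mul_exp_neg_div_sq (by linarith) hcr).const_mul _)).const_mul _
  have hFg : ∀ v ∈ Ioi (0 : ℝ), ‖F v‖ ≤ g v := by
    intro v (hv : 0 < v)
    have hweight : (1 + r / v) ^ N ≤ 2 ^ N * (1 + r ^ N * v ^ (-N)) := by
      rw [rpow_neg hv.le, ← div_eq_mul_inv, ← div_rpow hr.le hv.le]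
      exact one_add_rpow_le_two_rpow_mul (by positivity) hN
    calc ‖F v‖ ≤ B * (v ^ (-1 - b) * rexp (-(c * r ^ 2) / v ^ 2) * (1 + r / v) ^ N) := hF v hv
      _ ≤ B * (v ^ (-1 - b) * rexp (-(c * r ^ 2) / v ^ 2) *
            (2 ^ N * (1 + r ^ N * v ^ (-N)))) := by gcongr
      _ = g v := by
          simp only [g]
          rw [show -1 - (b + N) = -1 - b + -N by ring, rpow_add hv]
          ring
  calc |∫ v in Ioi (0 : ℝ), F v|
      ≤ ∫ v in Ioi (0 : ℝ), g v :=
        norm_integral_le_of_norm_le hg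
          ((ae_restrict_iff' measurableSet_Ioi).mpr (.of_forall hFg))
    _ = _ := by
        simp only [g]
        rw [integral_const_mul, integral_add (integrableOn_rpow_mul_exp_neg_div_sq hb hcr)
          ((integrableOn_rpow_mul_exp_neg_div_sq (by linarith) hcr).const_mul _),
          integral_const_mul, integral_rpow_mul_exp_neg_div_sq hb hcr,
          integral_rpow_mul_exp_neg_div_sq (by linarith) hcr,
          mul_sq_rpow_half hc.le hr.le, mul_sq_rpow_half hc.le hr.le,
          show -(b + N) = -b + -N by ring, rpow_add hr, rpow_neg hr.le N]
        field_simp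

lemma one_add_div_add_div_rpow_neg_le {v r p q N : ℝ} (hv : 0 < v) (hr : 0 ≤ r) (hp : 0 < p)
    (hq : 0 < q) (hN : 0 ≤ N) :
    (1 + v / p + v / q) ^ (-N) ≤ (1 + r / v) ^ N * (1 + r / p + r / q) ^ (-N) := by
  have hS : 0 < 1 + r / v := by positivity
  have hkey : 1 + r / p + r / q ≤ (1 + r / v) * (1 + v / p + v / q) := by
    have : (1 + r / v) * (1 + v / p + v / q) = 1 + r / p + r / q + (v / p + v / q + r / v) := by
      field_simp; ring
    rw [this]; linarith [show 0 ≤ v / p + v / q + r / v by positivity]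
  have h := rpow_le_rpow_of_nonpos (by positivity) hkey (neg_nonpos.mpr hN)
  rw [mul_rpow hS.le (by positivity), rpow_neg hS.le] at h
  calc (1 + v / p + v / q) ^ (-N)
      = (1 + r / v) ^ N * (((1 + r / v) ^ N)⁻¹ * (1 + v / p + v / q) ^ (-N)) := by
        rw [mul_inv_cancel_left₀ (by positivity)]
    _ ≤ (1 + r / v) ^ N * (1 + r / p + r / q) ^ (-N) := by gcongr

lemma abs_DbetaIntegrand_le {n : ℕ} {β : ℝ} {m : ℕ}
    {Q : ℝ → EuclideanSpace ℝ (Fin n) → EuclideanSpace ℝ (Fin n) → ℝ}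
    {x y : EuclideanSpace ℝ (Fin n)} {t v r p q c₀ A C N : ℝ}
    (hβm : β < m) (ht : 0 ≤ t) (hv : 0 < v) (hr : 0 ≤ r) (hr2 : r ^ 2 = dist x y ^ 2 + t ^ 2)
    (hp : 0 < p) (hq : 0 < q) (hA : 0 ≤ A) (hC : 0 ≤ C) (hN : 0 ≤ N)
    (hH : ∀ u, |hermiteH (m - 1) u| * rexp (-(u ^ 2)) ≤ A * rexp (-(u ^ 2) / 2))
    (hQ : |Q v x y| ≤
      C * v ^ (-(n : ℝ)) * rexp (-c₀ * dist x y ^ 2 / v ^ 2) * (1 + v / p + v / q) ^ (-N)) :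
    |DbetaIntegrand n β m Q t x y v| ≤
      A * (8 ^ (((m : ℝ) - β) / 2) * (1 / 2) * Gamma (((m : ℝ) - β) / 2)) * 2 ^ (1 - (m : ℝ)) *
        C * (1 + r / p + r / q) ^ (-N) *
        (v ^ (-1 - (β + n)) * rexp (-(min 8⁻¹ c₀ * r ^ 2) / v ^ 2) * (1 + r / v) ^ N) := by
  have hI := abs_hermiteTimeIntegral_le (sub_pos.mpr hβm) ht hv hA hH
  have hGamma : 0 < Gamma (((m : ℝ) - β) / 2) := Gamma_pos_of_pos (by linarith)
  have hexp : rexp (-(t ^ 2) / (8 * v ^ 2)) * rexp (-c₀ * dist x y ^ 2 / v ^ 2) ≤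
      rexp (-(min 8⁻¹ c₀ * r ^ 2) / v ^ 2) := by
    rw [← exp_add, exp_le_exp, hr2,
      show -(t ^ 2) / (8 * v ^ 2) + -c₀ * dist x y ^ 2 / v ^ 2 =
        -(8⁻¹ * t ^ 2 + c₀ * dist x y ^ 2) / v ^ 2 by ring]
    gcongr
    nlinarith [min_le_left 8⁻¹ c₀, min_le_right 8⁻¹ c₀, sq_nonneg t, sq_nonneg (dist x y)]
  have hpow : v ^ ((m : ℝ) - β) * (2 * v) ^ (1 - (m : ℝ)) * v ^ (-(n : ℝ)) / v ^ 2 =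
      2 ^ (1 - (m : ℝ)) * v ^ (-1 - (β + n)) := by
    rw [mul_rpow (by norm_num) hv.le, ← rpow_two, show -1 - (β + n) =
      (m : ℝ) - β + (1 - (m : ℝ)) + -(n : ℝ) - 2 by ring, rpow_sub hv _ 2,
      rpow_add hv _ (-(n : ℝ)), rpow_add hv ((m : ℝ) - β)]
    ring
  rw [DbetaIntegrand, abs_div, abs_mul, abs_mul, abs_of_nonneg (rpow_nonneg (by positivity) _),
    abs_of_pos (by positivity : (0 : ℝ) < v ^ 2)]
  calc _ ≤ A * (8 ^ (((m : ℝ) - β) / 2) * (1 / 2) * Gamma (((m : ℝ) - β) / 2)) *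
          rexp (-(t ^ 2) / (8 * v ^ 2)) * v ^ ((m : ℝ) - β) * (2 * v) ^ (1 - (m : ℝ)) *
          (C * v ^ (-(n : ℝ)) * rexp (-c₀ * dist x y ^ 2 / v ^ 2) *
            (1 + v / p + v / q) ^ (-N)) / v ^ 2 := by gcongr
    _ = A * (8 ^ (((m : ℝ) - β) / 2) * (1 / 2) * Gamma (((m : ℝ) - β) / 2)) * C *
          (rexp (-(t ^ 2) / (8 * v ^ 2)) * rexp (-c₀ * dist x y ^ 2 / v ^ 2)) *
          (1 + v / p + v / q) ^ (-N) *
          (v ^ ((m : ℝ) - β) * (2 * v) ^ (1 - (m : ℝ)) * v ^ (-(n : ℝ)) / v ^ 2) := by ring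
    _ ≤ A * (8 ^ (((m : ℝ) - β) / 2) * (1 / 2) * Gamma (((m : ℝ) - β) / 2)) * C *
          rexp (-(min 8⁻¹ c₀ * r ^ 2) / v ^ 2) *
          ((1 + r / v) ^ N * (1 + r / p + r / q) ^ (-N)) *
          (v ^ ((m : ℝ) - β) * (2 * v) ^ (1 - (m : ℝ)) * v ^ (-(n : ℝ)) / v ^ 2) := by
        gcongr
        exact one_add_div_add_div_rpow_neg_le hv hr hp hq hN
    _ = _ := by rw [hpow]; ring

theorem stmt_5 (n : ℕ)
    (ρ : EuclideanSpace ℝ (Fin n) → ℝ) (hρ : ∀ x, 0 < ρ x)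
    (c₀ : ℝ) (hc₀ : 0 < c₀) (β : ℝ) (hβ : 0 < β) (m : ℕ) (hm : m = Nat.floor β + 1)
    (Q : ℝ → EuclideanSpace ℝ (Fin n) → EuclideanSpace ℝ (Fin n) → ℝ)
    (hQ : ∀ N > (0 : ℝ), ∃ C_N > (0 : ℝ), ∀ (v : ℝ) (x y : EuclideanSpace ℝ (Fin n)), 0 < v →
      |Q v x y| ≤ C_N * v ^ (-(n : ℝ)) * Real.exp (-c₀ * dist x y ^ 2 / v ^ 2) *
        (1 + v / ρ x + v / ρ y) ^ (-N)) :
    ∀ N > (0 : ℝ), ∃ C > (0 : ℝ), ∀ (x y : EuclideanSpace ℝ (Fin n)) (t : ℝ), 0 < t →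
      t ^ β * ‖Dbeta n β m Q t x y‖
        ≤ C * t ^ β * (dist x y ^ 2 + t ^ 2) ^ (-((n : ℝ) + β) / 2) *
          (1 + Real.sqrt (dist x y ^ 2 + t ^ 2) / ρ x +
            Real.sqrt (dist x y ^ 2 + t ^ 2) / ρ y) ^ (-N) := by
  intro N hN
  obtain ⟨C_N, hC_N, hQb⟩ := hQ N hN
  obtain ⟨A, hA, hH⟩ := exists_abs_hermiteH_mul_exp_le (m - 1)
  have hβm : β < m := by rw [hm]; push_cast; exact Nat.lt_floor_add_one β
  have hc : 0 < min 8⁻¹ c₀ := lt_min (by norm_num) hc₀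
  set B := A * (8 ^ (((m : ℝ) - β) / 2) * (1 / 2) * Gamma (((m : ℝ) - β) / 2)) *
    2 ^ (1 - (m : ℝ)) * C_N
  set K := 2 ^ N * (min 8⁻¹ c₀ ^ (-(β + n) / 2) * (1 / 2) * Gamma ((β + n) / 2) +
    min 8⁻¹ c₀ ^ (-(β + n + N) / 2) * (1 / 2) * Gamma ((β + n + N) / 2))
  refine ⟨‖DbetaConst β m‖ * B * K + 1, by positivity, fun x y t ht => ?_⟩
  have hR : 0 < dist x y ^ 2 + t ^ 2 := by positivity
  set r := √(dist x y ^ 2 + t ^ 2) with hr_def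
  have hr : 0 < r := sqrt_pos.mpr hR
  set W := (1 + r / ρ x + r / ρ y) ^ (-N)
  have hW : 0 ≤ W := rpow_nonneg (by have := hρ x; have := hρ y; positivity) _
  have hint := abs_integral_le_of_le_rpow_mul_exp_neg_div_sq (B := B * W) (by positivity)
    (by positivity) hc hN.le hr fun v hv => abs_DbetaIntegrand_le hβm ht.le hv hr.le
      (sq_sqrt hR.le) (hρ x) (hρ y) hA hC_N.le hN.le hH (hQb v x y hv)
  have hrpow : r ^ (-(β + n)) = (dist x y ^ 2 + t ^ 2) ^ (-((n : ℝ) + β) / 2) := by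
    rw [hr_def, sqrt_eq_rpow, ← rpow_mul hR.le]; ring_nf
  rw [Dbeta_eq, norm_mul, Complex.norm_real, Real.norm_eq_abs]
  calc _ ≤ t ^ β * (‖DbetaConst β m‖ * (B * W * K * r ^ (-(β + n)))) := by gcongr
    _ = ‖DbetaConst β m‖ * B * K * (t ^ β * r ^ (-(β + n)) * W) := by ring
    _ ≤ (‖DbetaConst β m‖ * B * K + 1) * (t ^ β * r ^ (-(β + n)) * W) := by gcongr; linarith
    _ = _ := by rw [hrpow]; ring
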